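/- arXiv:2003.05444 — 6 statements merged into one kernel-verified Lean document; each statement's English description precedes it below -/
import Mathlib

section
/- Let T > 0, D ≥ 0 and C ≥ 0 be real numbers, and let R be a finite set of real numbers any two distinct elements of which differ by at least T. Then for all real numbers a ≤ b, C · |{x ∈ R : a ≤ x and x + D ≤ b}| ≤ max(0, (⌊(b − a − D)/T⌋ + 1) · C). In particular, taking a = 0, the total demand C · |{x ∈ R : 0 ≤ x and x + D ≤ t}| of jobs of a sporadic task that are both released and have their deadline in the interval (0, t] is at most max(0, (⌊(t − D)/T⌋ + 1) · C). -/
open scoped Classical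

lemma sep_card_aux (T : ℝ) (hT : 0 < T) (S : Finset ℝ)
    (hsep : ∀ x ∈ S, ∀ y ∈ S, x ≠ y → T ≤ |x - y|)
    (lo hi : ℝ) (hlo : lo ≤ hi) (hsub : ∀ x ∈ S, lo ≤ x ∧ x ≤ hi) :
    (S.card : ℝ) ≤ (hi - lo) / T + 1 := by
  induction S using Finset.strongInduction generalizing lo hi with
  | _ S ih =>
    rcases S.eq_empty_or_nonempty with rfl | hS
    · simp
      have := div_nonneg (by linarith : (0:ℝ) ≤ hi - lo) hT.le
      linarith
    · set M := S.max' hS with hMdef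
      have hM : M ∈ S := S.max'_mem hS
      have herase : S.erase M ⊂ S := Finset.erase_ssubset hM
      have hcard : S.card = (S.erase M).card + 1 := by
        have hpos := Finset.card_pos.mpr hS
        rw [Finset.card_erase_of_mem hM]
        omega
      rcases (S.erase M).eq_empty_or_nonempty with he | he
      · have : S.card = 1 := by rw [hcard, he]; simp
        rw [this]
        push_cast
        have : 0 ≤ (hi - lo) / T := div_nonneg (by linarith) hT.le
        linarith
      · obtain ⟨x, hx⟩ := he
        have hxS : x ∈ S := Finset.mem_of_mem_erase hx
        have hxne : x ≠ M := Finset.ne_of_mem_erase hx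
        have hbound : ∀ y ∈ S.erase M, lo ≤ y ∧ y ≤ M - T := by
          intro y hy
          have hyS : y ∈ S := Finset.mem_of_mem_erase hy
          have hyne : y ≠ M := Finset.ne_of_mem_erase hy
          have hyM : y ≤ M := S.le_max' y hyS
          have hsepy : T ≤ |y - M| := hsep y hyS M hM hyne
          rw [abs_sub_comm, abs_of_nonneg (by linarith)] at hsepy
          exact ⟨(hsub y hyS).1, by linarith⟩
        have hloM : lo ≤ M - T := (hbound x hx).1.trans ((hbound x hx).2.trans_eq rfl) |>.trans_eq rfl
        have hloM' : lo ≤ M - T := le_trans (hbound x hx).1 (hbound x hx).2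
        have hsep' : ∀ a ∈ S.erase M, ∀ b ∈ S.erase M, a ≠ b → T ≤ |a - b| :=
          fun a ha b hb hab =>
            hsep a (Finset.mem_of_mem_erase ha) b (Finset.mem_of_mem_erase hb) hab
        have hrec := ih (S.erase M) herase hsep' lo (M - T) hloM' hbound
        have hMhi : M ≤ hi := (hsub M hM).2
        rw [hcard]
        push_cast
        have h1 : (M - T - lo) / T + 1 = (M - lo) / T := by
          field_simp
          ring
        have h2 : (M - lo) / T ≤ (hi - lo) / T := by
          gcongr
        linarith

/-- Soundness of the demand bound function: if `R` is a finite set of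
release times any two distinct elements of which differ by at least `T`, then for all
`a ≤ b` the demand `C * |{x ∈ R : a ≤ x ∧ x + D ≤ b}|` is at most
`max 0 ((⌊(b - a - D)/T⌋ + 1) * C)`. -/
theorem demand_bound_function_sound (T D C : ℝ) (hT : 0 < T) (hD : 0 ≤ D) (hC : 0 ≤ C)
    (R : Finset ℝ) (hsep : ∀ x ∈ R, ∀ y ∈ R, x ≠ y → T ≤ |x - y|) :
    ∀ a b : ℝ, a ≤ b →
      C * ((R.filter (fun x => a ≤ x ∧ x + D ≤ b)).card : ℝ) ≤
        max 0 (((⌊(b - a - D) / T⌋ : ℝ) + 1) * C) := by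
  intro a b hab
  set S := R.filter (fun x => a ≤ x ∧ x + D ≤ b) with hSdef
  rcases S.eq_empty_or_nonempty with he | hS
  · rw [he]
    simp
  · obtain ⟨x, hx⟩ := hS
    have hxmem := Finset.mem_filter.mp hx
    have hax : a ≤ x := hxmem.2.1
    have hxb : x + D ≤ b := hxmem.2.2
    have hlohi : a ≤ b - D := by linarith
    have hsub : ∀ y ∈ S, a ≤ y ∧ y ≤ b - D := by
      intro y hy
      have := Finset.mem_filter.mp hy
      exact ⟨this.2.1, by linarith [this.2.2]⟩
    have hsep' : ∀ x ∈ S, ∀ y ∈ S, x ≠ y → T ≤ |x - y| :=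
      fun x hx y hy hxy =>
        hsep x (Finset.mem_of_mem_filter x hx) y (Finset.mem_of_mem_filter y hy) hxy
    have hcard := sep_card_aux T hT S hsep' a (b - D) hlohi hsub
    have heq : b - D - a = b - a - D := by ring
    rw [heq] at hcard
    have hfloor : ((S.card : ℤ) - 1) ≤ ⌊(b - a - D) / T⌋ := by
      rw [Int.le_floor]
      push_cast
      linarith
    have hfloor' : (S.card : ℝ) ≤ (⌊(b - a - D) / T⌋ : ℝ) + 1 := by
      have : ((S.card : ℤ) : ℝ) ≤ ((⌊(b - a - D) / T⌋ + 1 : ℤ) : ℝ) := by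
        exact_mod_cast by omega
      push_cast at this
      exact_mod_cast this
    calc C * (S.card : ℝ) ≤ ((⌊(b - a - D) / T⌋ : ℝ) + 1) * C := by
          rw [mul_comm]
          exact mul_le_mul_of_nonneg_right hfloor' hC
      _ ≤ max 0 (((⌊(b - a - D) / T⌋ : ℝ) + 1) * C) := le_max_right _ _
end

section
/- Let T, D, D^L be real numbers with T > 0 and 0 < D^L ≤ T, let R be a finite set of nonnegative reals any two distinct elements of which differ by at least T, and let 0 ≤ t1 ≤ t2 be reals. Then |{x ∈ R : x + D ≤ t2 and x + D^L > t1}| ≤ max(0, ⌊(t2 − t1 − D)/T⌋ + 1) + 1. That is, among the jobs with real deadline at most t2, at most one job beyond the count max(0, ⌊(t2 − t1 − D)/T⌋ + 1) can have its tightened deadline after the switch instant t1 (the carry-over job). -/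
/-! Every job counted has its release time in the half-open window `(t1 - DL, t2 - D]`, whose
length exceeds `t2 - t1 - D` by at most `DL ≤ T`. Measuring from the right end `t2 - D`, the
integer part of the distance in units of `T` tells two `T`-separated points apart, so a
`T`-separated set fits at most `⌈length / T⌉ ≤ ⌊(t2 - t1 - D) / T⌋ + 2` points into the window. -/

open Finset

lemma injOn_floor_div_of_separated {T : ℝ} (hT : 0 < T) (b : ℝ) {s : Set ℝ}
    (hsep : ∀ x ∈ s, ∀ y ∈ s, x ≠ y → T ≤ |x - y|) :
    Set.InjOn (fun x => ⌊(b - x) / T⌋) s := by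
  intro x hx y hy hxy
  by_contra hne
  have hlt : |(b - x) / T - (b - y) / T| < 1 := Int.abs_sub_lt_one_of_floor_eq_floor hxy
  rw [← sub_div, abs_div, abs_of_pos hT, div_lt_one hT, sub_sub_sub_cancel_left] at hlt
  exact (hsep y hy x hx (Ne.symm hne)).not_gt hlt

lemma card_le_toNat_ceil_of_separated {T : ℝ} (hT : 0 < T) {a b : ℝ} (s : Finset ℝ)
    (hsep : ∀ x ∈ s, ∀ y ∈ s, x ≠ y → T ≤ |x - y|) (hs : ∀ x ∈ s, a < x ∧ x ≤ b) :
    #s ≤ ⌈(b - a) / T⌉.toNat := by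
  have hmaps : ∀ x ∈ s, ⌊(b - x) / T⌋ ∈ Ico 0 ⌈(b - a) / T⌉ := by
    intro x hx
    obtain ⟨hax, hxb⟩ := hs x hx
    rw [mem_Ico, Int.floor_nonneg, Int.floor_lt]
    refine ⟨div_nonneg (sub_nonneg.2 hxb) hT.le, ?_⟩
    calc (b - x) / T < (b - a) / T := by gcongr
      _ ≤ ⌈(b - a) / T⌉ := Int.le_ceil _
  simpa [Int.card_Ico] using
    card_le_card_of_injOn _ hmaps (injOn_floor_div_of_separated hT b (s := ↑s) hsep)

lemma toNat_ceil_add_div_le {T L d : ℝ} (hT : 0 < T) (hdT : d ≤ T) :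
    (⌈(L + d) / T⌉.toNat : ℤ) ≤ max 0 (⌊L / T⌋ + 1) + 1 := by
  have hceil : ⌈(L + d) / T⌉ ≤ ⌊L / T⌋ + 2 :=
    calc ⌈(L + d) / T⌉ ≤ ⌈L / T + 1⌉ := by
          gcongr
          rw [add_div]
          gcongr
          exact (div_le_one hT).2 hdT
      _ = ⌈L / T⌉ + 1 := Int.ceil_add_one _
      _ ≤ ⌊L / T⌋ + 2 := by linarith [Int.ceil_le_floor_add_one (L / T)]
  rw [Int.toNat_eq_max]
  omega

theorem carry_over_job_count_general (T D DL : ℝ) (hT : 0 < T) (hDLT : DL ≤ T)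
    (R : Finset ℝ)
    (hsep : ∀ x ∈ R, ∀ y ∈ R, x ≠ y → T ≤ |x - y|)
    (t1 t2 : ℝ) :
    ((R.filter (fun x => x + D ≤ t2 ∧ t1 < x + DL)).card : ℝ) ≤
      max 0 ((⌊(t2 - t1 - D) / T⌋ : ℝ) + 1) + 1 := by
  set S := R.filter (fun x => x + D ≤ t2 ∧ t1 < x + DL)
  have hwindow : ∀ x ∈ S, t1 - DL < x ∧ x ≤ t2 - D := fun x hx => by
    obtain ⟨-, hD, hDL⟩ := mem_filter.1 hx
    constructor <;> linarith
  have hcard := card_le_toNat_ceil_of_separated hT S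
    (fun x hx y hy => hsep x (filter_subset _ _ hx) y (filter_subset _ _ hy)) hwindow
  have hbound := toNat_ceil_add_div_le (L := t2 - t1 - D) hT hDLT
  rw [show t2 - D - (t1 - DL) = t2 - t1 - D + DL by ring] at hcard
  have hcardZ : (#S : ℤ) ≤ max 0 (⌊(t2 - t1 - D) / T⌋ + 1) + 1 := by omega
  exact_mod_cast hcardZ

/-- Among the jobs of a sporadic task (release set `R`, minimum
separation `T`) with real deadline at most `t2`, at most one job beyond the count
`max 0 (⌊(t2 - t1 - D)/T⌋ + 1)` can have its tightened deadline after the switch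
instant `t1` (the carry-over job). -/
theorem carry_over_job_count (T D DL : ℝ) (hT : 0 < T) (hDL0 : 0 < DL) (hDLT : DL ≤ T)
    (R : Finset ℝ) (hnn : ∀ x ∈ R, 0 ≤ x)
    (hsep : ∀ x ∈ R, ∀ y ∈ R, x ≠ y → T ≤ |x - y|)
    (t1 t2 : ℝ) (ht1 : 0 ≤ t1) (ht12 : t1 ≤ t2) :
    ((R.filter (fun x => x + D ≤ t2 ∧ t1 < x + DL)).card : ℝ) ≤
      max 0 ((⌊(t2 - t1 - D) / T⌋ : ℝ) + 1) + 1 :=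
  carry_over_job_count_general T D DL hT hDLT R hsep t1 t2
end

section
/- Consider a dual-criticality sporadic task with parameters (T, D, D^L, C^L, C^H), let R be a release set for it, and let 0 ≤ t1 ≤ t2 be reals. Then: (i) at most one x ∈ R satisfies x < t1 < x + D^L; and (ii) C^L · |{x ∈ R : x + D^L ≤ t1}| + Σ_{x ∈ R with x < t1 < x + D^L ≤ t2} min(C^L, t1 − x) ≤ dbf^L(t1) + dbf^{UN}(t1,t2). (The first term is the demand of jobs of the task that complete by the switch instant t1; the second is the demand of its 'unnecessary' job, released before t1 with tightened deadline in (t1, t2]. This is the content of Lemma 2 of the paper.) -/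
open scoped Classical
open Finset

namespace MC

/-- `MOD t T = t - ⌊t/T⌋·T`. -/
noncomputable def MOD (t T : ℝ) : ℝ := t - (⌊t / T⌋ : ℝ) * T

/-- A dual-criticality sporadic task: minimum separation `T > 0`, low-criticality WCET
`CL` and high-criticality WCET `CH` with `0 < CL ≤ CH`, real deadline `D` and tightened
deadline `DL` with `CL ≤ DL ≤ D ≤ T`. -/
structure Task where
  T : ℝ
  D : ℝ
  DL : ℝ
  CL : ℝ
  CH : ℝ
  hT : 0 < T
  hCL : 0 < CL
  hCLCH : CL ≤ CH
  hCLDL : CL ≤ DL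
  hDLD : DL ≤ D
  hDT : D ≤ T

/-- Low-criticality demand bound function `dbf^L(t)`. -/
noncomputable def dbfL (τ : Task) (t : ℝ) : ℝ :=
  max 0 (((⌊(t - τ.DL) / τ.T⌋ : ℝ) + 1) * τ.CL)

/-- High-criticality demand bound function `dbf^H(t)`. -/
noncomputable def dbfH (τ : Task) (t : ℝ) : ℝ :=
  max 0 (((⌊(t - τ.D) / τ.T⌋ : ℝ) + 1) * τ.CH)

/-- Two-parameter low-criticality demand bound `dbf^L(t1, t2)`. -/
noncomputable def dbfL2 (τ : Task) (t1 t2 : ℝ) : ℝ :=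
  max 0 ((⌊(t2 - τ.D) / τ.T⌋ : ℝ) - (⌊(t2 - t1 - τ.D) / τ.T⌋ : ℝ) - 1) * τ.CL

/-- Unnecessary-job demand bound `dbf^{UN}(t1, t2)`. -/
noncomputable def dbfUN (τ : Task) (t1 t2 : ℝ) : ℝ :=
  if MOD t1 τ.T < τ.DL ∧ (⌊t1 / τ.T⌋ : ℝ) * τ.T + τ.DL ≤ t2 then
    min τ.CL (MOD t1 τ.T)
  else 0

/-- Maximum carry-over execution `CO(t)` pending at the start of an interval of length `t`. -/
noncomputable def CO (τ : Task) (t : ℝ) : ℝ :=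
  min τ.CL (MOD t τ.T - (τ.D - τ.DL))

/-- A release set for a task: a finite set of nonnegative reals, any two distinct
elements of which differ by at least the minimum separation `T`. -/
def ReleaseSet (τ : Task) (R : Finset ℝ) : Prop :=
  (∀ x ∈ R, 0 ≤ x) ∧ ∀ x ∈ R, ∀ y ∈ R, x ≠ y → τ.T ≤ |x - y|

/-- Case 1: `t2 - t1 ≤ D - D^L`; no job of the task executes after the switch. -/
def case1 (τ : Task) (t1 t2 : ℝ) : Prop := t2 - t1 ≤ τ.D - τ.DL

/-- Case 2: the carry-over job contributes demand after the switch. -/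
def case2 (τ : Task) (t1 t2 : ℝ) : Prop :=
  τ.D - τ.DL < MOD (t2 - t1) τ.T ∧ MOD (t2 - t1) τ.T < τ.D ∧
    (⌊(t2 - t1) / τ.T⌋ : ℝ) * τ.T + τ.D ≤ t2

/-- Case 3: neither case 1 nor case 2. -/
def case3 (τ : Task) (t1 t2 : ℝ) : Prop := ¬ case1 τ t1 t2 ∧ ¬ case2 τ t1 t2

/-- Set `S(t)` of HC tasks whose carry-over job contributes demand in an interval of
length `t` (existing test). -/
noncomputable def Sset {n : ℕ} (τ : Fin n → Task) (hc : Fin n → Bool) (t : ℝ) :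
    Finset (Fin n) :=
  univ.filter fun i =>
    hc i = true ∧ (τ i).D - (τ i).DL < MOD t (τ i).T ∧ MOD t (τ i).T < (τ i).D

/-- The existing-test bound `E(t)` (Proposition 3, from Ekberg and Yi). -/
noncomputable def Etest {n : ℕ} (τ : Fin n → Task) (hc : Fin n → Bool) (t : ℝ) : ℝ :=
  ∑ i ∈ univ.filter (fun i => hc i = true), dbfH (τ i) t +
    ∑ i ∈ Sset τ hc t, (((τ i).CH - (τ i).CL) + CO (τ i) t)

/-- `U`: the set of LC tasks together with HC tasks in case 1. -/
noncomputable def Uset {n : ℕ} (τ : Fin n → Task) (hc : Fin n → Bool) (t1 t2 : ℝ) :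
    Finset (Fin n) :=
  univ.filter fun i => hc i = false ∨ case1 (τ i) t1 t2

/-- HC tasks in case 2. -/
noncomputable def H2set {n : ℕ} (τ : Fin n → Task) (hc : Fin n → Bool) (t1 t2 : ℝ) :
    Finset (Fin n) :=
  univ.filter fun i => hc i = true ∧ case2 (τ i) t1 t2

/-- HC tasks in case 3. -/
noncomputable def H3set {n : ℕ} (τ : Fin n → Task) (hc : Fin n → Bool) (t1 t2 : ℝ) :
    Finset (Fin n) :=
  univ.filter fun i => hc i = true ∧ case3 (τ i) t1 t2

/-- The new-test bound `N(t1,t2)` of Theorem 1. -/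
noncomputable def Ntest {n : ℕ} (τ : Fin n → Task) (hc : Fin n → Bool) (t1 t2 : ℝ) : ℝ :=
  ∑ i ∈ Uset τ hc t1 t2, (dbfL (τ i) t1 + dbfUN (τ i) t1 t2) +
    ∑ i ∈ H2set τ hc t1 t2, (dbfL2 (τ i) t1 t2 + dbfH (τ i) (t2 - t1) + (τ i).CH) +
    ∑ i ∈ H3set τ hc t1 t2, (dbfL2 (τ i) t1 t2 + dbfH (τ i) (t2 - t1) + (τ i).CL)

/-- Collective bound `dbf_{UN}(t1,t2)` on the demand of all unnecessary jobs (Lemma 5). -/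
noncomputable def dbfUNtot {n : ℕ} (τ : Fin n → Task) (hc : Fin n → Bool) (t1 t2 : ℝ) : ℝ :=
  if h : (Uset τ hc t1 t2).Nonempty then
    min ((Uset τ hc t1 t2).sup' h fun i => (τ i).DL)
      (∑ i ∈ Uset τ hc t1 t2, dbfUN (τ i) t1 t2)
  else 0

/-- `dbf_{L1}(t1,t2)` (Lemma 7). -/
noncomputable def dbfL1tot {n : ℕ} (τ : Fin n → Task) (hc : Fin n → Bool) (t1 t2 : ℝ) : ℝ :=
  dbfUNtot τ hc t1 t2 + ∑ i ∈ Uset τ hc t1 t2, dbfL (τ i) t1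

/-- `dbf_{L2}(t1,t2)` (Lemma 8). -/
noncomputable def dbfL2tot {n : ℕ} (τ : Fin n → Task) (hc : Fin n → Bool) (t1 t2 : ℝ) : ℝ :=
  ∑ i ∈ H2set τ hc t1 t2, (dbfL2 (τ i) t1 t2 + (τ i).CL - CO (τ i) (t2 - t1))

/-- `dbf_{L3}(t1,t2)` (Lemma 9). -/
noncomputable def dbfL3tot {n : ℕ} (τ : Fin n → Task) (hc : Fin n → Bool) (t1 t2 : ℝ) : ℝ :=
  ∑ i ∈ H3set τ hc t1 t2, (dbfL2 (τ i) t1 t2 + (τ i).CL)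

/-- The improved-test bound `I(t1,t2)` of Theorem 2. -/
noncomputable def Itest {n : ℕ} (τ : Fin n → Task) (hc : Fin n → Bool) (t1 t2 : ℝ) : ℝ :=
  min t1 (dbfL1tot τ hc t1 t2 + dbfL2tot τ hc t1 t2 + dbfL3tot τ hc t1 t2) +
    (∑ i ∈ H2set τ hc t1 t2, dbfH (τ i) (t2 - t1) +
      ∑ i ∈ H3set τ hc t1 t2, dbfH (τ i) (t2 - t1)) +
    ∑ i ∈ H2set τ hc t1 t2, (CO (τ i) (t2 - t1) + (τ i).CH - (τ i).CL)


private lemma sep_card_bound (T : ℝ) (hT : 0 < T) :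
    ∀ (S : Finset ℝ), (∀ x ∈ S, ∀ y ∈ S, x ≠ y → T ≤ |x - y|) →
      (∀ x ∈ S, 0 ≤ x) → ∀ X : ℝ, (∀ x ∈ S, x ≤ X) → S.Nonempty →
      ((S.card : ℝ) - 1) * T ≤ X := by
  intro S
  induction S using Finset.strongInduction with
  | _ S ih =>
    intro hsep hnn X hX hne
    set b := S.max' hne with hb
    have hbS := S.max'_mem hne
    rcases eq_or_ne (S.erase b) ∅ with h0 | h0
    · have hSb : S = {b} := by
        rcases (Finset.erase_eq_empty_iff S b).mp h0 with h | h
        · exact absurd h (Finset.nonempty_iff_ne_empty.mp hne)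
        · exact h
      rw [hSb]
      simp only [Finset.card_singleton, Nat.cast_one, sub_self, zero_mul]
      exact le_trans (hnn b hbS) (hX b hbS)
    · have hne' : (S.erase b).Nonempty := Finset.nonempty_of_ne_empty h0
      have hsub : S.erase b ⊂ S := Finset.erase_ssubset hbS
      have hXb : ∀ x ∈ S.erase b, x ≤ b - T := by
        intro x hx
        have hxS := Finset.mem_of_mem_erase hx
        have hxb : x ≠ b := Finset.ne_of_mem_erase hx
        have h1 := hsep x hxS b hbS hxb
        have h2 : x ≤ b := S.le_max' x hxS
        have h3 : T ≤ b - x := by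
          rwa [abs_of_nonpos (by linarith), neg_sub] at h1
        linarith
      have hrec := ih (S.erase b) hsub
        (fun x hx y hy => hsep x (Finset.mem_of_mem_erase hx) y (Finset.mem_of_mem_erase hy))
        (fun x hx => hnn x (Finset.mem_of_mem_erase hx)) (b - T) hXb hne'
      have hc1 : 1 ≤ S.card := Finset.one_le_card.mpr hne
      rw [Finset.card_erase_of_mem hbS, Nat.cast_sub hc1] at hrec
      have hbX := hX b hbS
      have hexp : ((S.card : ℝ) - 1) * T = ((S.card : ℝ) - 1 - 1) * T + T := by ring
      push_cast at hrec ⊢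
      linarith

private lemma count_floor (T X : ℝ) (hT : 0 < T) (n : ℕ)
    (h : ((n : ℝ) - 1) * T ≤ X) : (n : ℝ) ≤ (⌊X / T⌋ : ℝ) + 1 := by
  have h1 : ((n : ℝ) - 1) ≤ X / T := (le_div_iff₀ hT).mpr h
  have h2 : ((n : ℤ) - 1) ≤ ⌊X / T⌋ := Int.le_floor.mpr (by push_cast; linarith)
  have h3 : (n : ℤ) ≤ ⌊X / T⌋ + 1 := by omega
  exact_mod_cast h3

/-- Lemma 2 of the paper. For a dual-criticality sporadic task with
release set `R` and `0 ≤ t1 ≤ t2`: (i) at most one job is released before `t1` with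
tightened deadline after `t1`; (ii) the demand of jobs completing by `t1` plus the
demand of the unnecessary job is at most `dbf^L(t1) + dbf^{UN}(t1,t2)`. -/
theorem lc_demand_bound (τ : Task) (R : Finset ℝ) (hR : ReleaseSet τ R)
    (t1 t2 : ℝ) (ht1 : 0 ≤ t1) (ht12 : t1 ≤ t2) :
    (R.filter (fun x => x < t1 ∧ t1 < x + τ.DL)).card ≤ 1 ∧
    τ.CL * ((R.filter (fun x => x + τ.DL ≤ t1)).card : ℝ) +
      ∑ x ∈ R.filter (fun x => x < t1 ∧ t1 < x + τ.DL ∧ x + τ.DL ≤ t2),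
        min τ.CL (t1 - x) ≤
      dbfL τ t1 + dbfUN τ t1 t2 := by
  obtain ⟨hRnn, hRsep⟩ := hR
  have hT := τ.hT
  have hCL := τ.hCL
  have hDLT : τ.DL ≤ τ.T := le_trans τ.hDLD τ.hDT
  constructor
  · apply Finset.card_le_one.mpr
    intro a ha b hb
    simp only [Finset.mem_filter] at ha hb
    by_contra hne
    have hs := hRsep a ha.1 b hb.1 hne
    have h1 : |a - b| < τ.DL := by
      rw [abs_sub_lt_iff]
      constructor <;> linarith [ha.2.1, ha.2.2, hb.2.1, hb.2.2]
    linarith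
  · set A := R.filter (fun x => x + τ.DL ≤ t1) with hAdef
    set B := R.filter (fun x => x < t1 ∧ t1 < x + τ.DL ∧ x + τ.DL ≤ t2) with hBdef
    set k : ℤ := ⌊t1 / τ.T⌋ with hk
    have hkle : (k : ℝ) * τ.T ≤ t1 := (le_div_iff₀ hT).mp (Int.floor_le (t1 / τ.T))
    have hklt : t1 < ((k : ℝ) + 1) * τ.T := (div_lt_iff₀ hT).mp (Int.lt_floor_add_one (t1 / τ.T))
    have hk0 : (0 : ℤ) ≤ k := Int.floor_nonneg.mpr (div_nonneg ht1 (le_of_lt hT))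
    have hMOD : MOD t1 τ.T = t1 - (k : ℝ) * τ.T := rfl
    have hMODnn : 0 ≤ MOD t1 τ.T := by rw [hMOD]; linarith
    have hUNnn : 0 ≤ dbfUN τ t1 t2 := by
      unfold dbfUN
      split_ifs
      · exact le_min (le_of_lt hCL) hMODnn
      · exact le_rfl
    have hdbfLnn : 0 ≤ dbfL τ t1 := le_max_left _ _
    have hkey : ∀ m : ℕ, (m : ℝ) ≤ (⌊(t1 - τ.DL) / τ.T⌋ : ℝ) + 1 →
        (m : ℝ) * τ.CL ≤ dbfL τ t1 := by
      intro m hm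
      exact le_trans (mul_le_mul_of_nonneg_right hm (le_of_lt hCL)) (le_max_right _ _)
    have hAmem : ∀ a ∈ A, a ∈ R ∧ a + τ.DL ≤ t1 := by
      intro a ha; exact Finset.mem_filter.mp ha
    have hcount : ∀ X : ℝ, (∀ a ∈ A, a ≤ X) → A.Nonempty → ((A.card : ℝ) - 1) * τ.T ≤ X := by
      intro X hX hne
      exact sep_card_bound τ.T hT A
        (fun x hx y hy => hRsep x (hAmem x hx).1 y (hAmem y hy).1)
        (fun x hx => hRnn x (hAmem x hx).1) X hX hne
    -- basic bound: CL * |A| ≤ dbfL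
    have hAbound : τ.CL * (A.card : ℝ) ≤ dbfL τ t1 := by
      rcases A.eq_empty_or_nonempty with hAe | hAne
      · rw [hAe]; simpa using hdbfLnn
      · have h1 := hcount (t1 - τ.DL) (fun a ha => by linarith [(hAmem a ha).2]) hAne
        have h2 := hkey A.card (count_floor τ.T (t1 - τ.DL) hT A.card h1)
        linarith
    rcases B.eq_empty_or_nonempty with hBe | hBne
    · rw [hBe]
      simp only [Finset.sum_empty, add_zero]
      linarith
    · have hBcard : B.card ≤ 1 := by
        apply Finset.card_le_one.mpr
        intro a ha b hb
        simp only [hBdef, Finset.mem_filter] at ha hb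
        by_contra hne
        have hs := hRsep a ha.1 b hb.1 hne
        have h1 : |a - b| < τ.DL := by
          rw [abs_sub_lt_iff]
          constructor <;> linarith [ha.2.1, ha.2.2.1, hb.2.1, hb.2.2.1]
        linarith
      obtain ⟨x, hBx⟩ := Finset.card_eq_one.mp
        (le_antisymm hBcard (Finset.one_le_card.mpr hBne))
      have hxB : x ∈ B := by rw [hBx]; exact Finset.mem_singleton_self x
      have hxprop := Finset.mem_filter.mp hxB
      obtain ⟨hxR, hx1, hx2, hx3⟩ := hxprop
      have hxnn : 0 ≤ x := hRnn x hxR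
      rw [hBx, Finset.sum_singleton]
      -- elements of A are at most x - T
      have hAx : ∀ a ∈ A, a ≤ x - τ.T := by
        intro a ha
        obtain ⟨haR, haDL⟩ := hAmem a ha
        have hne : a ≠ x := by
          intro h; rw [h] at haDL; linarith
        have hs := hRsep a haR x hxR hne
        have hax : a < x := by linarith
        have h3 : τ.T ≤ x - a := by
          rwa [abs_of_nonpos (by linarith), neg_sub] at hs
        linarith
      by_cases hc : (k : ℝ) * τ.T ≤ x ∧ MOD t1 τ.T < τ.DL
      · -- dbfUN covers the unnecessary job
        have hUN : dbfUN τ t1 t2 = min τ.CL (MOD t1 τ.T) := by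
          unfold dbfUN
          rw [if_pos ⟨hc.2, by push_cast; linarith [hc.1]⟩]
        have hmin : min τ.CL (t1 - x) ≤ dbfUN τ t1 t2 := by
          rw [hUN]
          exact min_le_min le_rfl (by rw [hMOD]; linarith [hc.1])
        linarith
      · -- absorb the unnecessary job into dbfL
        have hfin : (A.card : ℝ) * τ.T ≤ t1 - τ.DL := by
          rcases not_and_or.mp hc with hcx | hcm
          · -- x < k T
            push_neg at hcx
            have hk1 : (1 : ℤ) ≤ k := by
              by_contra h
              push_neg at h
              interval_cases k
              · simp at hcx; linarith
            have hk1' : (1 : ℝ) ≤ (k : ℝ) := by exact_mod_cast hk1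
            have hcard : (A.card : ℝ) ≤ (k : ℝ) - 1 := by
              rcases A.eq_empty_or_nonempty with hAe | hAne
              · rw [hAe]; simp; linarith
              · have h1 := hcount (x - τ.T) hAx hAne
                have h2 : ((A.card : ℝ) - 1) * τ.T < ((k : ℝ) - 1) * τ.T := by nlinarith
                have h3 : (A.card : ℝ) - 1 < (k : ℝ) - 1 := lt_of_mul_lt_mul_right h2 (le_of_lt hT)
                have h4 : (A.card : ℤ) < k := by exact_mod_cast (by push_cast; linarith : ((A.card : ℤ) : ℝ) < (k : ℝ))
                have h5 : (A.card : ℤ) ≤ k - 1 := by omega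
                exact_mod_cast (by exact_mod_cast h5 : ((A.card : ℤ) : ℝ) ≤ ((k - 1 : ℤ) : ℝ))
            nlinarith
          · -- DL ≤ MOD t1 T
            push_neg at hcm
            rw [hMOD] at hcm
            have hcard : (A.card : ℝ) ≤ (k : ℝ) := by
              rcases A.eq_empty_or_nonempty with hAe | hAne
              · rw [hAe]; simp; exact_mod_cast hk0
              · have h1 := hcount (x - τ.T) hAx hAne
                have h2 : ((A.card : ℝ) - 1) * τ.T < (k : ℝ) * τ.T := by nlinarith
                have h3 : (A.card : ℝ) - 1 < (k : ℝ) := lt_of_mul_lt_mul_right h2 (le_of_lt hT)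
                have h4 : (A.card : ℤ) - 1 < k := by exact_mod_cast (by push_cast; linarith : ((A.card : ℤ) : ℝ) - 1 < (k : ℝ))
                have h5 : (A.card : ℤ) ≤ k := by omega
                exact_mod_cast (by exact_mod_cast h5 : ((A.card : ℤ) : ℝ) ≤ (k : ℝ))
            nlinarith
        have h1 : ((A.card + 1 : ℕ) : ℝ) - 1 = (A.card : ℝ) := by push_cast; ring
        have h2 := count_floor τ.T (t1 - τ.DL) hT (A.card + 1) (by rw [h1]; exact hfin)
        have h3 := hkey (A.card + 1) h2
        push_cast at h3
        have hmin : min τ.CL (t1 - x) ≤ τ.CL := min_le_left _ _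
        linarith

end MC
end

section
/- Consider a dual-criticality sporadic task with parameters (T, D, D^L, C^L, C^H), let R be a release set for it, and let 0 ≤ t1 ≤ t2 be reals such that the task is in case 2, i.e., D − D^L < MOD(t2 − t1, T) < D and ⌊(t2 − t1)/T⌋·T + D ≤ t2. Then C^H · |{x ∈ R : x + D ≤ t2 and x + D^L > t1}| + C^L · |{x ∈ R : x + D ≤ t2 and x + D^L ≤ t1}| ≤ dbf^L(t1,t2) + dbf^H(t2 − t1) + C^H. (Each job with real deadline at most t2 is counted at its high-criticality WCET if its tightened deadline exceeds the switch instant t1, so that it may execute after the switch, and at its low-criticality WCET otherwise; this is the demand bound of Lemma 4 of the paper.) -/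
open scoped Classical
open Finset

namespace MC

/-! Case 2 splits the jobs with real deadline at most `t2` at the switch instant `t1`: at most
`⌊(t2 - t1)/T⌋ + 1` of them have tightened deadline after `t1`, since their releases lie in a window
shorter than `(⌊(t2 - t1)/T⌋ + 1)·T`, and at most `⌊(t2 - D)/T⌋ + 1` in all. Counting the first
group at `C^H` and the rest at `C^L` gives the bound, because in case 2 we have
`⌊(t2 - t1 - D)/T⌋ = ⌊(t2 - t1)/T⌋ - 1`, so that `dbf^H(t2 - t1) = ⌊(t2 - t1)/T⌋·C^H` and
`dbf^L(t1, t2) = (⌊(t2 - D)/T⌋ - ⌊(t2 - t1)/T⌋)·C^L`. -/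

theorem MOD_nonneg {t T : ℝ} (hT : 0 < T) : 0 ≤ MOD t T := by
  have := Int.floor_le (t / T)
  rw [le_div_iff₀ hT] at this
  unfold MOD
  linarith

theorem floor_sub_div_eq_floor_div_sub_one {t T D : ℝ} (hT : 0 < T) (hDT : D ≤ T)
    (hMOD : MOD t T < D) : ⌊(t - D) / T⌋ = ⌊t / T⌋ - 1 := by
  have hnonneg := MOD_nonneg (t := t) hT
  unfold MOD at hnonneg hMOD
  rw [Int.floor_eq_iff, le_div_iff₀ hT, div_lt_iff₀ hT]
  push_cast
  constructor <;> nlinarith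

/-- Points pairwise at distance at least `T` in `[u, v]` lie in distinct blocks
`[u + kT, u + (k+1)T)`, `0 ≤ k ≤ ⌊(v - u)/T⌋`. -/
theorem card_le_toNat_floor_of_pairwise_sep {T u v : ℝ} (hT : 0 < T) {S : Finset ℝ}
    (hsep : (S : Set ℝ).Pairwise fun x y => T ≤ |x - y|) (hS : ∀ x ∈ S, x ∈ Set.Icc u v) :
    S.card ≤ (⌊(v - u) / T⌋ + 1).toNat := by
  have hmaps : Set.MapsTo (fun x => ⌊(x - u) / T⌋) S (Icc 0 ⌊(v - u) / T⌋) := by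
    intro x hx
    obtain ⟨hux, hxv⟩ := hS x hx
    simp only [coe_Icc, Set.mem_Icc, Int.floor_nonneg]
    exact ⟨div_nonneg (sub_nonneg.2 hux) hT.le, Int.floor_le_floor (by gcongr)⟩
  have hinj : Set.InjOn (fun x => ⌊(x - u) / T⌋) S := by
    intro x hx y hy hxy
    by_contra hne
    have hclose := Int.abs_sub_lt_one_of_floor_eq_floor hxy
    rw [← sub_div, sub_sub_sub_cancel_right, abs_div, abs_of_pos hT, div_lt_one hT] at hclose
    exact (hsep hx hy hne).not_gt hclose
  calc S.card ≤ (Icc 0 ⌊(v - u) / T⌋).card := card_le_card_of_injOn _ hmaps hinj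
    _ = (⌊(v - u) / T⌋ + 1).toNat := by rw [Int.card_Icc, sub_zero]

theorem ReleaseSet.card_filter_le {τ : Task} {R : Finset ℝ} (hR : ReleaseSet τ R)
    (p : ℝ → Prop) [DecidablePred p] {u v : ℝ} (hp : ∀ x ∈ R, p x → x ∈ Set.Icc u v) :
    (R.filter p).card ≤ (⌊(v - u) / τ.T⌋ + 1).toNat := by
  refine card_le_toNat_floor_of_pairwise_sep τ.hT ?_ fun x hx => ?_
  · exact fun x hx y hy => hR.2 x (mem_filter.1 hx).1 y (mem_filter.1 hy).1
  · exact hp x (mem_filter.1 hx).1 (mem_filter.1 hx).2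

theorem hc_case2_demand_bound_general (τ : Task) (R : Finset ℝ) (hR : ReleaseSet τ R)
    (t1 t2 : ℝ) (ht12 : t1 ≤ t2)
    (hcase2 : case2 τ t1 t2) :
    τ.CH * ((R.filter (fun x => x + τ.D ≤ t2 ∧ t1 < x + τ.DL)).card : ℝ) +
      τ.CL * ((R.filter (fun x => x + τ.D ≤ t2 ∧ x + τ.DL ≤ t1)).card : ℝ) ≤
      dbfL2 τ t1 t2 + dbfH τ (t2 - t1) + τ.CH := by
  obtain ⟨-, hMOD, hlast⟩ := hcase2
  set f := ⌊(t2 - t1) / τ.T⌋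
  set m := ⌊(t2 - τ.D) / τ.T⌋
  have hf : 0 ≤ f := Int.floor_nonneg.2 (div_nonneg (sub_nonneg.2 ht12) τ.hT.le)
  have hfm : f ≤ m := Int.le_floor.2 (by rw [le_div_iff₀ τ.hT]; linarith)
  have hfloor : ⌊(t2 - t1 - τ.D) / τ.T⌋ = f - 1 :=
    floor_sub_div_eq_floor_div_sub_one τ.hT τ.hDT hMOD
  have hlate : ((R.filter (fun x => x + τ.D ≤ t2 ∧ t1 < x + τ.DL)).card : ℝ) ≤ f + 1 := by
    have hcard := hR.card_filter_le (fun x => x + τ.D ≤ t2 ∧ t1 < x + τ.DL)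
      (u := t1 - τ.DL) (v := t2 - τ.D) fun x _ hx => ⟨by linarith [hx.2], by linarith [hx.1]⟩
    have hwindow : ⌊(t2 - τ.D - (t1 - τ.DL)) / τ.T⌋ ≤ f :=
      Int.floor_le_floor (div_le_div_of_nonneg_right (by linarith [τ.hDLD]) τ.hT.le)
    exact_mod_cast (by omega : ((R.filter _).card : ℤ) ≤ f + 1)
  have hall : ((R.filter (fun x => x + τ.D ≤ t2 ∧ t1 < x + τ.DL)).card : ℝ) +
      (R.filter (fun x => x + τ.D ≤ t2 ∧ x + τ.DL ≤ t1)).card ≤ m + 1 := by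
    have hcard := hR.card_filter_le (fun x => x + τ.D ≤ t2) (u := 0) (v := t2 - τ.D)
      fun x hx hxD => ⟨hR.1 x hx, by linarith⟩
    rw [sub_zero, ← card_filter_add_card_filter_not (fun x => t1 < x + τ.DL)] at hcard
    simp only [filter_filter, not_lt] at hcard
    exact_mod_cast (by omega : ((_ + _ : ℕ) : ℤ) ≤ m + 1)
  have hL2 : ((m : ℝ) - f) * τ.CL ≤ dbfL2 τ t1 t2 := by
    unfold dbfL2
    rw [hfloor]
    gcongr
    · exact τ.hCL.le
    · exact le_max_of_le_right (by push_cast; linarith)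
  have hH : (f : ℝ) * τ.CH ≤ dbfH τ (t2 - t1) :=
    le_max_of_le_right (by rw [hfloor]; push_cast; linarith)
  linarith [mul_le_mul_of_nonneg_left hlate (sub_nonneg.2 τ.hCLCH),
    mul_le_mul_of_nonneg_left hall τ.hCL.le]

/-- Lemma 4 of the paper. Demand bound for a HC task in case 2:
each job with real deadline at most `t2` is counted at `C^H` if its tightened deadline
exceeds `t1` and at `C^L` otherwise, and the total is at most
`dbf^L(t1,t2) + dbf^H(t2 - t1) + C^H`. -/
theorem hc_case2_demand_bound (τ : Task) (R : Finset ℝ) (hR : ReleaseSet τ R)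
    (t1 t2 : ℝ) (ht1 : 0 ≤ t1) (ht12 : t1 ≤ t2)
    (hcase2 : case2 τ t1 t2) :
    τ.CH * ((R.filter (fun x => x + τ.D ≤ t2 ∧ t1 < x + τ.DL)).card : ℝ) +
      τ.CL * ((R.filter (fun x => x + τ.D ≤ t2 ∧ x + τ.DL ≤ t1)).card : ℝ) ≤
      dbfL2 τ t1 t2 + dbfH τ (t2 - t1) + τ.CH :=
  hc_case2_demand_bound_general τ R hR t1 t2 ht12 hcase2

end MC
end

section
/- For every dual-criticality task system and all reals 0 ≤ t1 < t2, the improved-test bound is at most the new-test bound: I(t1,t2) ≤ N(t1,t2). In particular, if the new test condition N(t1,t2) ≤ t2 of Theorem 1 holds at (t1,t2), then the improved test condition I(t1,t2) ≤ t2 of Theorem 2 also holds at (t1,t2). -/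
open scoped Classical
open Finset

namespace MC

/-- The improved-test bound is at most the new-test bound,
`I(t1,t2) ≤ N(t1,t2)`; in particular, if the new test condition `N(t1,t2) ≤ t2` of
Theorem 1 holds, then the improved test condition `I(t1,t2) ≤ t2` of Theorem 2 holds. -/
theorem improved_le_new {n : ℕ} (τ : Fin n → Task) (hc : Fin n → Bool)
    (hLC : ∀ i, hc i = false → (τ i).CL = (τ i).CH ∧ (τ i).DL = (τ i).D)
    (t1 t2 : ℝ) (ht1 : 0 ≤ t1) (ht12 : t1 < t2) :
    Itest τ hc t1 t2 ≤ Ntest τ hc t1 t2 ∧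
      (Ntest τ hc t1 t2 ≤ t2 → Itest τ hc t1 t2 ≤ t2) := by
  have hUN : dbfUNtot τ hc t1 t2 ≤ ∑ i ∈ Uset τ hc t1 t2, dbfUN (τ i) t1 t2 := by
    unfold dbfUNtot
    split
    · exact min_le_right _ _
    · next h =>
        rw [Finset.not_nonempty_iff_eq_empty.mp h]
        simp
  have e2 : ∑ i ∈ H2set τ hc t1 t2, (dbfL2 (τ i) t1 t2 + (τ i).CL - CO (τ i) (t2 - t1))
      + ∑ i ∈ H2set τ hc t1 t2, dbfH (τ i) (t2 - t1)
      + ∑ i ∈ H2set τ hc t1 t2, (CO (τ i) (t2 - t1) + (τ i).CH - (τ i).CL)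
      = ∑ i ∈ H2set τ hc t1 t2, (dbfL2 (τ i) t1 t2 + dbfH (τ i) (t2 - t1) + (τ i).CH) := by
    rw [← Finset.sum_add_distrib, ← Finset.sum_add_distrib]
    exact Finset.sum_congr rfl (fun i _ => by ring)
  have e3 : ∑ i ∈ H3set τ hc t1 t2, (dbfL2 (τ i) t1 t2 + (τ i).CL)
      + ∑ i ∈ H3set τ hc t1 t2, dbfH (τ i) (t2 - t1)
      = ∑ i ∈ H3set τ hc t1 t2, (dbfL2 (τ i) t1 t2 + dbfH (τ i) (t2 - t1) + (τ i).CL) := by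
    rw [← Finset.sum_add_distrib]
    exact Finset.sum_congr rfl (fun i _ => by ring)
  have eU : ∑ i ∈ Uset τ hc t1 t2, dbfUN (τ i) t1 t2
      + ∑ i ∈ Uset τ hc t1 t2, dbfL (τ i) t1
      = ∑ i ∈ Uset τ hc t1 t2, (dbfL (τ i) t1 + dbfUN (τ i) t1 t2) := by
    rw [← Finset.sum_add_distrib]
    exact Finset.sum_congr rfl (fun i _ => by ring)
  have hmin : min t1 (dbfL1tot τ hc t1 t2 + dbfL2tot τ hc t1 t2 + dbfL3tot τ hc t1 t2)
      ≤ dbfL1tot τ hc t1 t2 + dbfL2tot τ hc t1 t2 + dbfL3tot τ hc t1 t2 :=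
    min_le_right _ _
  have key : Itest τ hc t1 t2 ≤ Ntest τ hc t1 t2 := by
    unfold Itest Ntest
    unfold dbfL1tot dbfL2tot dbfL3tot at hmin ⊢
    linarith
  exact ⟨key, fun h => le_trans key h⟩

end MC
end

section
/- Let τ be a dual-criticality task system and let 0 ≤ t1 < t2 be reals, and set t := t2 − t1. If the existing-test condition E(t) ≤ t holds (the schedulability condition of Proposition 3), then the improved-test condition I(t1,t2) ≤ t2 holds (the schedulability condition of Theorem 2). Consequently, if E(t) ≤ t for all t ≥ 0, then I(t1,t2) ≤ t2 for all 0 ≤ t1 < t2: the improved demand-based test dominates the existing demand-based test. (Theorem 3 of the paper.) -/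
open scoped Classical
open Finset

namespace MC

/-!
The LO-mode part of `I(t1,t2)` is capped by `t1` through the `min`, so it suffices that the
remaining HI-mode part is at most `E(t2 - t1)`. It is: the tasks in cases 2 and 3 are disjoint
families of HC tasks, so their `dbf^H` terms form part of the first sum of `E`, and every task
in case 2 belongs to `S(t2 - t1)` and contributes exactly its term `(C^H - C^L) + CO` there.
Hence `I(t1,t2) ≤ t1 + E(t2 - t1)`.
-/

theorem dbfH_nonneg (τ : Task) (t : ℝ) : 0 ≤ dbfH τ t :=
  le_max_left _ _

theorem CO_nonneg {τ : Task} {t : ℝ} (h : τ.D - τ.DL < MOD t τ.T) : 0 ≤ CO τ t :=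
  le_min τ.hCL.le (by linarith)

section Sets

variable {n : ℕ} (τ : Fin n → Task) (hc : Fin n → Bool) (t1 t2 : ℝ)

theorem disjoint_H2set_H3set : Disjoint (H2set τ hc t1 t2) (H3set τ hc t1 t2) := by
  simp only [Finset.disjoint_left, H2set, H3set, mem_filter, mem_univ, true_and]
  rintro i ⟨-, h2⟩ ⟨-, -, not_h2⟩
  exact not_h2 h2

theorem H2set_union_H3set_subset :
    H2set τ hc t1 t2 ∪ H3set τ hc t1 t2 ⊆ univ.filter (fun i => hc i = true) := by
  intro i hi
  simp only [H2set, H3set, mem_union, mem_filter, mem_univ, true_and] at hi ⊢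
  rcases hi with ⟨hHC, -⟩ | ⟨hHC, -⟩ <;> exact hHC

theorem H2set_subset_Sset : H2set τ hc t1 t2 ⊆ Sset τ hc (t2 - t1) := by
  intro i hi
  simp only [H2set, mem_filter, mem_univ, true_and] at hi
  obtain ⟨hHC, hlo, hhi, -⟩ := hi
  simpa only [Sset, mem_filter, mem_univ, true_and] using ⟨hHC, hlo, hhi⟩

theorem sum_dbfH_H2set_add_H3set_le :
    ∑ i ∈ H2set τ hc t1 t2, dbfH (τ i) (t2 - t1) + ∑ i ∈ H3set τ hc t1 t2, dbfH (τ i) (t2 - t1)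
      ≤ ∑ i ∈ univ.filter (fun i => hc i = true), dbfH (τ i) (t2 - t1) := by
  rw [← sum_union (disjoint_H2set_H3set τ hc t1 t2)]
  exact sum_le_sum_of_subset_of_nonneg (H2set_union_H3set_subset τ hc t1 t2)
    fun i _ _ => dbfH_nonneg _ _

theorem sum_carryOver_H2set_le :
    ∑ i ∈ H2set τ hc t1 t2, (CO (τ i) (t2 - t1) + (τ i).CH - (τ i).CL)
      ≤ ∑ i ∈ Sset τ hc (t2 - t1), (((τ i).CH - (τ i).CL) + CO (τ i) (t2 - t1)) := by
  calc ∑ i ∈ H2set τ hc t1 t2, (CO (τ i) (t2 - t1) + (τ i).CH - (τ i).CL)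
      = ∑ i ∈ H2set τ hc t1 t2, (((τ i).CH - (τ i).CL) + CO (τ i) (t2 - t1)) :=
        sum_congr rfl fun i _ => by ring
    _ ≤ _ := by
      refine sum_le_sum_of_subset_of_nonneg (H2set_subset_Sset τ hc t1 t2) fun i hi _ => ?_
      simp only [Sset, mem_filter, mem_univ, true_and] at hi
      linarith [(τ i).hCLCH, CO_nonneg hi.2.1]

theorem Itest_le_add_Etest : Itest τ hc t1 t2 ≤ t1 + Etest τ hc (t2 - t1) := by
  have hLO := min_le_left t1 (dbfL1tot τ hc t1 t2 + dbfL2tot τ hc t1 t2 + dbfL3tot τ hc t1 t2)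
  have hH := sum_dbfH_H2set_add_H3set_le τ hc t1 t2
  have hCO := sum_carryOver_H2set_le τ hc t1 t2
  rw [Itest, Etest]
  linarith

end Sets

theorem improved_dominates_existing_general {n : ℕ} (τ : Fin n → Task) (hc : Fin n → Bool) :
    (∀ t1 t2 : ℝ, 0 ≤ t1 → t1 < t2 →
        Etest τ hc (t2 - t1) ≤ t2 - t1 → Itest τ hc t1 t2 ≤ t2) ∧
      ((∀ t : ℝ, 0 ≤ t → Etest τ hc t ≤ t) →
        ∀ t1 t2 : ℝ, 0 ≤ t1 → t1 < t2 → Itest τ hc t1 t2 ≤ t2) := by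
  have pointwise : ∀ t1 t2 : ℝ, 0 ≤ t1 → t1 < t2 →
      Etest τ hc (t2 - t1) ≤ t2 - t1 → Itest τ hc t1 t2 ≤ t2 := fun t1 t2 _ _ hE => by
    linarith [Itest_le_add_Etest τ hc t1 t2]
  exact ⟨pointwise, fun hAll t1 t2 h0 h12 => pointwise t1 t2 h0 h12 (hAll _ (by linarith))⟩

/-- Theorem 3 of the paper. The improved demand-based test dominates
the existing demand-based test: if `E(t2 - t1) ≤ t2 - t1` then `I(t1,t2) ≤ t2`;
consequently, if `E(t) ≤ t` for all `t ≥ 0`, then `I(t1,t2) ≤ t2` for all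
`0 ≤ t1 < t2`. -/
theorem improved_dominates_existing {n : ℕ} (τ : Fin n → Task) (hc : Fin n → Bool)
    (hLC : ∀ i, hc i = false → (τ i).CL = (τ i).CH ∧ (τ i).DL = (τ i).D) :
    (∀ t1 t2 : ℝ, 0 ≤ t1 → t1 < t2 →
        Etest τ hc (t2 - t1) ≤ t2 - t1 → Itest τ hc t1 t2 ≤ t2) ∧
      ((∀ t : ℝ, 0 ≤ t → Etest τ hc t ≤ t) →
        ∀ t1 t2 : ℝ, 0 ≤ t1 → t1 < t2 → Itest τ hc t1 t2 ≤ t2) :=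
  improved_dominates_existing_general τ hc

end MC
end
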